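/- arXiv:1010.5435 — 2 statements merged into one kernel-verified Lean document; each statement's English description precedes it below -/
import Mathlib

section
/- Conservation of the canonical energy–momentum. Suppose the Lagrangian does not depend explicitly on the coordinates, i.e. L = L(q⁰, q¹, …, q^N), and suppose Φ satisfies the Euler–Lagrange equations E_B ≡ 0 on ℝⁿ. Define the canonical energy–momentum τ^λ_σ(x) := δ^λ_σ L(jetΦ(x)) − Σ_{B=1}^{f} Σ_{Z=0}^{N−1} (∂_σ ∂_{ν₁}⋯∂_{ν_Z} Φ_B)(x) · K^{Bλν₁…ν_Z}(x). Then ∂_λ τ^λ_σ(x) = 0 for every x ∈ ℝⁿ and every σ ∈ {0,…,n−1}. -/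
open scoped BigOperators

/-- Index of a jet variable: derivative order `X ≤ N`, field index `B`,
and a multi-index of coordinate directions of length `X`. -/
abbrev JIdx (n f N : ℕ) : Type := Σ X : Fin (N + 1), Fin f × (Fin (X : ℕ) → Fin n)

/-- The (finite-dimensional) space of jet variables `q = (q^X_{B,λ₁…λ_X})`. -/
abbrev Jet (n f N : ℕ) : Type := JIdx n f N → ℝ

/-- Partial derivative in the `i`-th coordinate direction. -/
noncomputable def pd {n : ℕ} (i : Fin n) (F : (Fin n → ℝ) → ℝ) (x : Fin n → ℝ) : ℝ :=
  fderiv ℝ F x (Pi.single i 1)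

/-- Iterated partial derivative along a list of coordinate directions. -/
noncomputable def pds {n : ℕ} : List (Fin n) → ((Fin n → ℝ) → ℝ) → (Fin n → ℝ) → ℝ
  | [], F => F
  | i :: l, F => pd i (pds l F)

/-- The `N`-jet of the family of fields `Φ` at the point `x`:
the collection `(Φ_B(x), ∂Φ_B(x), …, ∂^N Φ_B(x))`. -/
noncomputable def jet {n f N : ℕ} (Φ : Fin f → (Fin n → ℝ) → ℝ) (x : Fin n → ℝ) :
    Jet n f N :=
  fun idx => pds (List.ofFn idx.2.2) (Φ idx.2.1) x

/-- `∂L/∂q_idx` evaluated along the jet of `Φ`. -/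
noncomputable def dLdq {n f N : ℕ} (L : (Fin n → ℝ) → Jet n f N → ℝ)
    (Φ : Fin f → (Fin n → ℝ) → ℝ) (idx : JIdx n f N) (x : Fin n → ℝ) : ℝ :=
  fderiv ℝ (L x) (jet Φ x) (Pi.single idx 1)

/-- The jet with the multi-index of the order-`X` variables permuted by `σ`. -/
def permJet {n f N : ℕ} (X : Fin (N + 1)) (σ : Equiv.Perm (Fin (X : ℕ)))
    (q : Jet n f N) : Jet n f N :=
  fun idx =>
    if h : idx.1 = X then
      q ⟨idx.1, idx.2.1, fun i =>
        idx.2.2 (Fin.cast (congrArg Fin.val h).symm (σ (Fin.cast (congrArg Fin.val h) i)))⟩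
    else q idx

/-- The Euler–Lagrange expression `E_B(x)`. -/
noncomputable def EulerLagrange {n f N : ℕ} (L : (Fin n → ℝ) → Jet n f N → ℝ)
    (Φ : Fin f → (Fin n → ℝ) → ℝ) (B : Fin f) (x : Fin n → ℝ) : ℝ :=
  ∑ X : Fin (N + 1), ∑ lam : Fin (X : ℕ) → Fin n,
    (-1 : ℝ) ^ (X : ℕ) * pds (List.ofFn lam) (dLdq L Φ ⟨X, B, lam⟩) x

/-- The coefficients `K^{Bλν₁…ν_Z}(x)` of the boundary/divergence term. -/
noncomputable def Kcur {n f N : ℕ} (L : (Fin n → ℝ) → Jet n f N → ℝ)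
    (Φ : Fin f → (Fin n → ℝ) → ℝ) (B : Fin f) (lam : Fin n) (Z : Fin N)
    (nu : Fin (Z : ℕ) → Fin n) (x : Fin n → ℝ) : ℝ :=
  ∑ Y : Fin (N - (Z : ℕ)), ∑ mu : Fin (Y : ℕ) → Fin n,
    (-1 : ℝ) ^ (Y : ℕ) *
      pds (List.ofFn mu)
        (dLdq L Φ
          ⟨⟨1 + (Y : ℕ) + (Z : ℕ), by have h1 := Y.isLt; have h2 := Z.isLt; omega⟩, B,
            Fin.append (Fin.append (fun _ : Fin 1 => lam) mu) nu⟩) x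

/-!
Write `P^{B l}` for `∂L/∂q_{B,l}` along the jet of `Φ` (zero beyond order `N`) and
`M^{B l} = ∑_Y (-1)^Y ∂_{μ₁⋯μ_Y} P^{B μ₁⋯μ_Y l}` for the higher Euler–Lagrange expressions.
Then `M^{B ∅} = E_B`, `M^{B λν} = K^{Bλν}`, and `M^{B l} = P^{B l} - ∂_λ M^{B λ l}`; reordering
multi-indices is harmless because both `L` and mixed partial derivatives are symmetric.
By the chain rule `∂_σ L = ∑ ∂_σ ∂_ν Φ_B · P^{B ν}`, while by the product rule and the recursion
the sum of `∂_λ (∂_σ ∂_ν Φ_B · K^{B λ ν})` over `|ν| = Z` telescopes in `Z`, leaving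
`∂_σ L - ∂_σ Φ_B · E_B`. Hence `∂_λ τ^λ_σ = ∑_B ∂_σ Φ_B · E_B`, which vanishes on solutions.
-/

section PartialDerivatives

variable {n : ℕ}

theorem contDiff_pd (i : Fin n) {F : (Fin n → ℝ) → ℝ} (hF : ContDiff ℝ (⊤ : ℕ∞) F) :
    ContDiff ℝ (⊤ : ℕ∞) (pd i F) :=
  (contDiff_infty_iff_fderiv.1 hF).2.clm_apply contDiff_const

theorem contDiff_pds {F : (Fin n → ℝ) → ℝ} (hF : ContDiff ℝ (⊤ : ℕ∞) F) :
    ∀ l : List (Fin n), ContDiff ℝ (⊤ : ℕ∞) (pds l F)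
  | [] => hF
  | i :: l => contDiff_pd i (contDiff_pds hF l)

theorem pd_comm {F : (Fin n → ℝ) → ℝ} (hF : ContDiff ℝ (⊤ : ℕ∞) F) (i j : Fin n) :
    pd i (pd j F) = pd j (pd i F) := by
  funext x
  have hF' : Differentiable ℝ (fderiv ℝ F) :=
    (contDiff_infty_iff_fderiv.1 hF).2.differentiable (by simp)
  have hpd : ∀ v w : Fin n → ℝ, fderiv ℝ (fun y => fderiv ℝ F y v) x w
      = fderiv ℝ (fderiv ℝ F) x w v := fun v w => by
    rw [fderiv_clm_apply (hF' x) (differentiableAt_const v)]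
    simp
  change fderiv ℝ (fun y => fderiv ℝ F y (Pi.single j 1)) x (Pi.single i 1)
    = fderiv ℝ (fun y => fderiv ℝ F y (Pi.single i 1)) x (Pi.single j 1)
  rw [hpd, hpd]
  exact hF.contDiffAt.isSymmSndFDerivAt (by simp [ENat.LEInfty.out]) _ _

theorem pds_perm {F : (Fin n → ℝ) → ℝ} (hF : ContDiff ℝ (⊤ : ℕ∞) F) {l l' : List (Fin n)}
    (h : l.Perm l') : pds l F = pds l' F := by
  induction h with
  | nil => rfl
  | cons i _ ih => exact congrArg (pd i) ih
  | swap i j l => exact pd_comm (contDiff_pds hF l) j i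
  | trans _ _ ih₁ ih₂ => exact ih₁.trans ih₂

theorem pd_sub {F G : (Fin n → ℝ) → ℝ} (hF : Differentiable ℝ F) (hG : Differentiable ℝ G)
    (i : Fin n) (x : Fin n → ℝ) : pd i (fun y => F y - G y) x = pd i F x - pd i G x := by
  simp [pd, fderiv_fun_sub (hF x) (hG x)]

theorem pd_mul {F G : (Fin n → ℝ) → ℝ} (hF : Differentiable ℝ F) (hG : Differentiable ℝ G)
    (i : Fin n) (x : Fin n → ℝ) :
    pd i (fun y => F y * G y) x = pd i F x * G x + F x * pd i G x := by
  simp only [pd, fderiv_fun_mul (hF x) (hG x), add_apply, smul_apply, smul_eq_mul]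
  ring

theorem pd_const_mul {F : (Fin n → ℝ) → ℝ} (hF : Differentiable ℝ F) (c : ℝ) (i : Fin n)
    (x : Fin n → ℝ) : pd i (fun y => c * F y) x = c * pd i F x := by
  simp [pd, fderiv_const_mul (hF x) c]

theorem pd_sum {ι : Type*} (s : Finset ι) {F : ι → (Fin n → ℝ) → ℝ}
    (hF : ∀ j, Differentiable ℝ (F j)) (i : Fin n) (x : Fin n → ℝ) :
    pd i (fun y => ∑ j ∈ s, F j y) x = ∑ j ∈ s, pd i (F j) x := by
  simp [pd, fderiv_fun_sum fun j _ => hF j x]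

theorem pds_zero : ∀ l : List (Fin n), pds l (0 : (Fin n → ℝ) → ℝ) = 0
  | [] => rfl
  | i :: l => by
    funext x
    simp [pds, pds_zero l, pd]

end PartialDerivatives

section ChainRule

variable {n f N : ℕ} {Φ : Fin f → (Fin n → ℝ) → ℝ}

theorem contDiff_jet (hΦ : ∀ B, ContDiff ℝ (⊤ : ℕ∞) (Φ B)) :
    ContDiff ℝ (⊤ : ℕ∞) (fun x => jet (N := N) Φ x) :=
  contDiff_pi.2 fun idx => contDiff_pds (hΦ idx.2.1) _

theorem contDiff_dLdq {L0 : Jet n f N → ℝ} (hL : ContDiff ℝ (⊤ : ℕ∞) L0)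
    (hΦ : ∀ B, ContDiff ℝ (⊤ : ℕ∞) (Φ B)) (idx : JIdx n f N) :
    ContDiff ℝ (⊤ : ℕ∞) (dLdq (fun _ => L0) Φ idx) :=
  ((contDiff_infty_iff_fderiv.1 hL).2.clm_apply contDiff_const).comp (contDiff_jet hΦ)

theorem ContinuousLinearMap.apply_eq_sum_single {ι F : Type*} [Fintype ι] [DecidableEq ι]
    [NormedAddCommGroup F] [NormedSpace ℝ F] (T : (ι → ℝ) →L[ℝ] F) (w : ι → ℝ) :
    T w = ∑ i, w i • T (Pi.single i 1) := by
  conv_lhs => rw [← Finset.univ_sum_single w]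
  rw [map_sum]
  refine Finset.sum_congr rfl fun i _ => ?_
  rw [← map_smul, ← Pi.single_smul', smul_eq_mul, mul_one]

theorem pd_comp_jet {L0 : Jet n f N → ℝ} (hL : ContDiff ℝ (⊤ : ℕ∞) L0)
    (hΦ : ∀ B, ContDiff ℝ (⊤ : ℕ∞) (Φ B)) (σ : Fin n) (x : Fin n → ℝ) :
    pd σ (fun y => L0 (jet Φ y)) x
      = ∑ idx : JIdx n f N,
          pds (σ :: List.ofFn idx.2.2) (Φ idx.2.1) x * dLdq (fun _ => L0) Φ idx x := by
  have hjet : ∀ idx : JIdx n f N, DifferentiableAt ℝ (fun y => jet (N := N) Φ y idx) x :=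
    fun idx => (contDiff_pds (hΦ idx.2.1) _).differentiable (by simp) x
  change fderiv ℝ (L0 ∘ fun y => jet (N := N) Φ y) x (Pi.single σ 1) = _
  rw [fderiv_comp x ((hL.differentiable (by simp)) _) (differentiableAt_pi.2 hjet),
    ContinuousLinearMap.comp_apply, fderiv_pi hjet, ContinuousLinearMap.apply_eq_sum_single]
  rfl

end ChainRule

section Symmetry

variable {n f N : ℕ}

theorem fderiv_apply_single_equiv_of_invariant {ι : Type*} [Fintype ι] [DecidableEq ι]
    {L : (ι → ℝ) → ℝ} (e : ι ≃ ι) (hL : ∀ q, L (q ∘ e) = L q) {p : ι → ℝ} (hp : p ∘ e = p)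
    (i : ι) : fderiv ℝ L p (Pi.single (e i) 1) = fderiv ℝ L p (Pi.single i 1) := by
  let T := (LinearEquiv.funCongrLeft ℝ ℝ e).toContinuousLinearEquiv
  have hLT : L ∘ T = L := funext hL
  have hT : ∀ q, T q = q ∘ e := fun _ => rfl
  have := T.comp_right_fderiv (f := L) (x := p)
  rw [hLT, hT, hp] at this
  conv_lhs => rw [this]
  rw [ContinuousLinearMap.comp_apply, ContinuousLinearEquiv.coe_coe, hT,
    Pi.single_comp_equiv, Equiv.symm_apply_apply]

def permIdx (X : Fin (N + 1)) (σ : Equiv.Perm (Fin (X : ℕ))) (idx : JIdx n f N) :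
    JIdx n f N :=
  if h : idx.1 = X then
    ⟨idx.1, idx.2.1, fun i =>
      idx.2.2 (Fin.cast (congrArg Fin.val h).symm (σ (Fin.cast (congrArg Fin.val h) i)))⟩
  else idx

theorem permIdx_mk (X : Fin (N + 1)) (σ : Equiv.Perm (Fin (X : ℕ))) (B : Fin f)
    (κ : Fin X → Fin n) : permIdx X σ ⟨X, B, κ⟩ = ⟨X, B, κ ∘ σ⟩ := by
  simp [permIdx, Function.comp_def]

theorem permIdx_of_ne {X X' : Fin (N + 1)} (σ : Equiv.Perm (Fin (X : ℕ))) (h : X' ≠ X)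
    (B : Fin f) (κ : Fin X' → Fin n) : permIdx X σ ⟨X', B, κ⟩ = ⟨X', B, κ⟩ :=
  dif_neg h

theorem permIdx_permIdx_symm (X : Fin (N + 1)) (σ : Equiv.Perm (Fin (X : ℕ)))
    (idx : JIdx n f N) : permIdx X σ (permIdx X σ.symm idx) = idx := by
  obtain ⟨X', B, κ⟩ := idx
  by_cases h : X' = X
  · subst h
    simp [permIdx_mk, Function.comp_assoc]
  · rw [permIdx_of_ne _ h, permIdx_of_ne _ h]

def permIdxEquiv (X : Fin (N + 1)) (σ : Equiv.Perm (Fin (X : ℕ))) : JIdx n f N ≃ JIdx n f N where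
  toFun := permIdx X σ
  invFun := permIdx X σ.symm
  left_inv idx := by simpa using permIdx_permIdx_symm X σ.symm idx
  right_inv := permIdx_permIdx_symm X σ

theorem permJet_eq_comp (X : Fin (N + 1)) (σ : Equiv.Perm (Fin (X : ℕ))) (q : Jet n f N) :
    permJet X σ q = q ∘ permIdxEquiv X σ := by
  funext idx
  simp only [permJet, permIdxEquiv, permIdx, Equiv.coe_fn_mk, Function.comp_apply]
  split <;> rfl

def PermJetInvariant (L0 : Jet n f N → ℝ) : Prop :=
  ∀ (q : Jet n f N) (X : Fin (N + 1)) (σ : Equiv.Perm (Fin (X : ℕ))), L0 (permJet X σ q) = L0 q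

variable {Φ : Fin f → (Fin n → ℝ) → ℝ}

theorem jet_comp_permIdx (hΦ : ∀ B, ContDiff ℝ (⊤ : ℕ∞) (Φ B)) (x : Fin n → ℝ)
    (X : Fin (N + 1)) (σ : Equiv.Perm (Fin (X : ℕ))) : jet Φ x ∘ permIdxEquiv X σ = jet Φ x := by
  funext ⟨X', B, κ⟩
  by_cases h : X' = X
  · subst h
    rw [Function.comp_apply, permIdxEquiv, Equiv.coe_fn_mk, permIdx_mk]
    exact congrFun (pds_perm (hΦ B) (Equiv.Perm.ofFn_comp_perm σ κ)) x
  · rw [Function.comp_apply, permIdxEquiv, Equiv.coe_fn_mk, permIdx_of_ne _ h]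

theorem dLdq_comp_perm {L0 : Jet n f N → ℝ} (hLsymm : PermJetInvariant L0)
    (hΦ : ∀ B, ContDiff ℝ (⊤ : ℕ∞) (Φ B)) (X : Fin (N + 1)) (B : Fin f) (κ : Fin X → Fin n)
    (σ : Equiv.Perm (Fin (X : ℕ))) :
    dLdq (fun _ => L0) Φ ⟨X, B, κ ∘ σ⟩ = dLdq (fun _ => L0) Φ ⟨X, B, κ⟩ := by
  funext x
  rw [dLdq, dLdq, ← permIdx_mk]
  change fderiv ℝ L0 (jet Φ x) (Pi.single (permIdxEquiv X σ _) 1) = _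
  exact fderiv_apply_single_equiv_of_invariant _ (fun q => by rw [← permJet_eq_comp, hLsymm])
    (jet_comp_permIdx hΦ x X σ) _

end Symmetry

theorem exists_comp_perm_of_ofFn_perm {α : Type*} [LinearOrder α] {m : ℕ} {κ κ' : Fin m → α}
    (h : (List.ofFn κ).Perm (List.ofFn κ')) : ∃ σ : Equiv.Perm (Fin m), κ ∘ σ = κ' := by
  have hsorted : κ ∘ Tuple.sort κ = κ' ∘ Tuple.sort κ' :=
    List.ofFn_injective <| List.Perm.eq_of_sortedLE (Tuple.monotone_sort κ).sortedLE_ofFn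
      (Tuple.monotone_sort κ').sortedLE_ofFn <|
        ((Equiv.Perm.ofFn_comp_perm _ κ).trans h).trans (Equiv.Perm.ofFn_comp_perm _ κ').symm
  refine ⟨(Tuple.sort κ').symm.trans (Tuple.sort κ), funext fun i => ?_⟩
  simpa using congrFun hsorted ((Tuple.sort κ').symm i)

section ListIndexed

variable {n f N : ℕ} {L0 : Jet n f N → ℝ} {Φ : Fin f → (Fin n → ℝ) → ℝ}

/-- `∂L/∂q_{B,l}` along the jet of `Φ`, extended by zero to multi-indices of length `> N`. -/
noncomputable def dLdqList (L0 : Jet n f N → ℝ) (Φ : Fin f → (Fin n → ℝ) → ℝ) (B : Fin f)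
    (l : List (Fin n)) : (Fin n → ℝ) → ℝ :=
  if h : l.length < N + 1 then dLdq (fun _ => L0) Φ ⟨⟨l.length, h⟩, B, l.get⟩ else 0

theorem dLdqList_ofFn (X : Fin (N + 1)) (B : Fin f) (κ : Fin X → Fin n) :
    dLdqList L0 Φ B (List.ofFn κ) = dLdq (fun _ => L0) Φ ⟨X, B, κ⟩ := by
  obtain ⟨m, hm⟩ := X
  suffices ∀ l, List.ofFn κ = l → dLdqList L0 Φ B l = dLdq (fun _ => L0) Φ ⟨⟨m, hm⟩, B, κ⟩ from
    this _ rfl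
  intro l hl
  obtain rfl : l.length = m := by rw [← hl, List.length_ofFn]
  obtain rfl : κ = l.get := List.ofFn_injective (hl.trans (List.ofFn_get l).symm)
  simp [dLdqList, hm]

theorem dLdqList_of_lt_length {l : List (Fin n)} (h : N < l.length) (B : Fin f) :
    dLdqList L0 Φ B l = 0 :=
  dif_neg (by omega)

theorem dLdqList_perm (hLsymm : PermJetInvariant L0)
    (hΦ : ∀ B, ContDiff ℝ (⊤ : ℕ∞) (Φ B)) (B : Fin f) {l l' : List (Fin n)} (h : l.Perm l') :
    dLdqList L0 Φ B l = dLdqList L0 Φ B l' := by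
  by_cases hl : N < l.length
  · rw [dLdqList_of_lt_length hl, dLdqList_of_lt_length (h.length_eq ▸ hl)]
  obtain ⟨m, κ, rfl⟩ : ∃ m, ∃ κ : Fin m → Fin n, List.ofFn κ = l := ⟨_, l.get, List.ofFn_get l⟩
  obtain ⟨κ', rfl⟩ : ∃ κ' : Fin m → Fin n, List.ofFn κ' = l' :=
    ⟨fun i => l'.get (i.cast (by simp [← h.length_eq])),
      List.ext_get (by simp [← h.length_eq]) (by simp)⟩
  obtain ⟨σ, rfl⟩ := exists_comp_perm_of_ofFn_perm h
  rw [List.length_ofFn] at hl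
  rw [dLdqList_ofFn ⟨m, by omega⟩, dLdqList_ofFn ⟨m, by omega⟩, dLdq_comp_perm hLsymm hΦ]

theorem contDiff_dLdqList (hL : ContDiff ℝ (⊤ : ℕ∞) L0) (hΦ : ∀ B, ContDiff ℝ (⊤ : ℕ∞) (Φ B))
    (B : Fin f) (l : List (Fin n)) : ContDiff ℝ (⊤ : ℕ∞) (dLdqList L0 Φ B l) := by
  unfold dLdqList
  split
  · exact contDiff_dLdq hL hΦ _
  · exact contDiff_const

end ListIndexed

theorem sum_arrow_fin_succ {α M : Type*} [Fintype α] [AddCommMonoid M] {m : ℕ}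
    (F : (Fin (m + 1) → α) → M) : ∑ μ, F μ = ∑ i, ∑ μ : Fin m → α, F (Fin.cons i μ) := by
  rw [← Fintype.sum_prod_type', ← (Fin.consEquiv fun _ => α).sum_comp]
  rfl

section HigherEulerLagrange

variable {n f N : ℕ} {L0 : Jet n f N → ℝ} {Φ : Fin f → (Fin n → ℝ) → ℝ}

noncomputable def higherEulerLagrangeTerm (L0 : Jet n f N → ℝ) (Φ : Fin f → (Fin n → ℝ) → ℝ)
    (B : Fin f) (l : List (Fin n)) (Y : ℕ) (x : Fin n → ℝ) : ℝ :=
  ∑ μ : Fin Y → Fin n, (-1 : ℝ) ^ Y * pds (List.ofFn μ) (dLdqList L0 Φ B (List.ofFn μ ++ l)) x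

noncomputable def higherEulerLagrange (L0 : Jet n f N → ℝ) (Φ : Fin f → (Fin n → ℝ) → ℝ)
    (B : Fin f) (l : List (Fin n)) (x : Fin n → ℝ) : ℝ :=
  ∑ Y ∈ Finset.range (N + 1), higherEulerLagrangeTerm L0 Φ B l Y x

theorem contDiff_higherEulerLagrangeTerm (hL : ContDiff ℝ (⊤ : ℕ∞) L0)
    (hΦ : ∀ B, ContDiff ℝ (⊤ : ℕ∞) (Φ B)) (B : Fin f) (l : List (Fin n)) (Y : ℕ) :
    ContDiff ℝ (⊤ : ℕ∞) (higherEulerLagrangeTerm L0 Φ B l Y) :=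
  ContDiff.sum fun _ _ => contDiff_const.mul (contDiff_pds (contDiff_dLdqList hL hΦ B _) _)

theorem contDiff_higherEulerLagrange (hL : ContDiff ℝ (⊤ : ℕ∞) L0)
    (hΦ : ∀ B, ContDiff ℝ (⊤ : ℕ∞) (Φ B)) (B : Fin f) (l : List (Fin n)) :
    ContDiff ℝ (⊤ : ℕ∞) (higherEulerLagrange L0 Φ B l) :=
  ContDiff.sum fun _ _ => contDiff_higherEulerLagrangeTerm hL hΦ B l _

theorem higherEulerLagrangeTerm_zero (B : Fin f) (l : List (Fin n)) :
    higherEulerLagrangeTerm L0 Φ B l 0 = dLdqList L0 Φ B l := by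
  funext x
  simp [higherEulerLagrangeTerm, pds]

theorem higherEulerLagrangeTerm_of_lt {B : Fin f} {l : List (Fin n)} {Y : ℕ}
    (h : N < Y + l.length) : higherEulerLagrangeTerm L0 Φ B l Y = 0 := by
  funext x
  refine Finset.sum_eq_zero fun μ _ => ?_
  rw [dLdqList_of_lt_length (by simpa using h), pds_zero, Pi.zero_apply, mul_zero]

theorem sum_pd_higherEulerLagrangeTerm_cons (hL : ContDiff ℝ (⊤ : ℕ∞) L0)
    (hLsymm : PermJetInvariant L0)
    (hΦ : ∀ B, ContDiff ℝ (⊤ : ℕ∞) (Φ B)) (B : Fin f) (l : List (Fin n)) (Y : ℕ)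
    (x : Fin n → ℝ) :
    ∑ i : Fin n, pd i (higherEulerLagrangeTerm L0 Φ B (i :: l) Y) x
      = -higherEulerLagrangeTerm L0 Φ B l (Y + 1) x := by
  have hdiff : ∀ l' μ : List (Fin n), Differentiable ℝ (pds μ (dLdqList L0 Φ B (μ ++ l'))) :=
    fun _ μ => (contDiff_pds (contDiff_dLdqList hL hΦ B _) μ).differentiable (by simp)
  have hterm : ∀ (i : Fin n) (μ : Fin Y → Fin n),
      pd i (pds (List.ofFn μ) (dLdqList L0 Φ B (List.ofFn μ ++ i :: l))) x
        = pds (List.ofFn (Fin.cons i μ)) (dLdqList L0 Φ B (List.ofFn (Fin.cons i μ) ++ l)) x := by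
    intro i μ
    rw [List.ofFn_cons, dLdqList_perm hLsymm hΦ B List.perm_middle]
    rfl
  calc ∑ i : Fin n, pd i (higherEulerLagrangeTerm L0 Φ B (i :: l) Y) x
      = ∑ i : Fin n, ∑ μ : Fin Y → Fin n, (-1 : ℝ) ^ Y *
          pds (List.ofFn (Fin.cons i μ)) (dLdqList L0 Φ B (List.ofFn (Fin.cons i μ) ++ l)) x := by
        refine Finset.sum_congr rfl fun i _ => ?_
        refine (pd_sum _ (fun μ => (hdiff _ _).const_mul _) i x).trans ?_
        simp only [pd_const_mul (hdiff _ _), hterm]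
    _ = ∑ μ : Fin (Y + 1) → Fin n, (-1 : ℝ) ^ Y *
          pds (List.ofFn μ) (dLdqList L0 Φ B (List.ofFn μ ++ l)) x := by
        rw [sum_arrow_fin_succ]
    _ = _ := by
        simp [higherEulerLagrangeTerm, pow_succ, Finset.sum_neg_distrib]

theorem higherEulerLagrange_eq_dLdqList_sub (hL : ContDiff ℝ (⊤ : ℕ∞) L0)
    (hLsymm : PermJetInvariant L0)
    (hΦ : ∀ B, ContDiff ℝ (⊤ : ℕ∞) (Φ B)) (B : Fin f) (l : List (Fin n)) (x : Fin n → ℝ) :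
    higherEulerLagrange L0 Φ B l x
      = dLdqList L0 Φ B l x - ∑ i : Fin n, pd i (higherEulerLagrange L0 Φ B (i :: l)) x := by
  have hdiv : ∑ i : Fin n, pd i (higherEulerLagrange L0 Φ B (i :: l)) x
      = -∑ Y ∈ Finset.range (N + 1), higherEulerLagrangeTerm L0 Φ B l (Y + 1) x := by
    calc ∑ i : Fin n, pd i (higherEulerLagrange L0 Φ B (i :: l)) x
        = ∑ i : Fin n, ∑ Y ∈ Finset.range (N + 1),
            pd i (higherEulerLagrangeTerm L0 Φ B (i :: l) Y) x :=
          Finset.sum_congr rfl fun i _ => pd_sum _ (fun Y =>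
            (contDiff_higherEulerLagrangeTerm hL hΦ B _ Y).differentiable (by simp)) i x
      _ = _ := by
          rw [Finset.sum_comm, ← Finset.sum_neg_distrib]
          exact Finset.sum_congr rfl fun Y _ =>
            sum_pd_higherEulerLagrangeTerm_cons hL hLsymm hΦ B l Y x
  rw [hdiv, Finset.sum_range_succ, higherEulerLagrangeTerm_of_lt (by omega), higherEulerLagrange,
    Finset.sum_range_succ', higherEulerLagrangeTerm_zero, Pi.zero_apply]
  ring

theorem higherEulerLagrange_eq_sum_range (B : Fin f) (l : List (Fin n)) (x : Fin n → ℝ) :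
    higherEulerLagrange L0 Φ B l x
      = ∑ Y ∈ Finset.range (N + 1 - l.length), higherEulerLagrangeTerm L0 Φ B l Y x := by
  refine (Finset.sum_subset (Finset.range_subset_range.2 (Nat.sub_le _ _)) fun Y _ hY => ?_).symm
  rw [higherEulerLagrangeTerm_of_lt (by simp at hY; omega), Pi.zero_apply]

theorem higherEulerLagrange_of_lt_length {l : List (Fin n)} (h : N < l.length) (B : Fin f)
    (x : Fin n → ℝ) : higherEulerLagrange L0 Φ B l x = 0 := by
  rw [higherEulerLagrange_eq_sum_range, Nat.sub_eq_zero_of_le h, Finset.sum_range_zero]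

theorem higherEulerLagrange_nil (B : Fin f) (x : Fin n → ℝ) :
    higherEulerLagrange L0 Φ B [] x = EulerLagrange (fun _ => L0) Φ B x := by
  simp only [higherEulerLagrange, higherEulerLagrangeTerm, EulerLagrange, List.append_nil,
    ← dLdqList_ofFn]
  exact (Fin.sum_univ_eq_sum_range (fun Y => ∑ μ : Fin Y → Fin n,
    (-1 : ℝ) ^ Y * pds (List.ofFn μ) (dLdqList L0 Φ B (List.ofFn μ)) x) _).symm

theorem higherEulerLagrange_cons_ofFn (hLsymm : PermJetInvariant L0)
    (hΦ : ∀ B, ContDiff ℝ (⊤ : ℕ∞) (Φ B)) (B : Fin f) (i : Fin n) (Z : Fin N)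
    (ν : Fin Z → Fin n) (x : Fin n → ℝ) :
    higherEulerLagrange L0 Φ B (i :: List.ofFn ν) x = Kcur (fun _ => L0) Φ B i Z ν x := by
  rw [higherEulerLagrange_eq_sum_range, List.length_cons, List.length_ofFn,
    show N + 1 - (Z + 1) = N - Z by omega, ← Fin.sum_univ_eq_sum_range]
  refine Finset.sum_congr rfl fun Y _ => Finset.sum_congr rfl fun μ _ => ?_
  rw [← dLdqList_ofFn, List.ofFn_fin_append, List.ofFn_fin_append,
    dLdqList_perm hLsymm hΦ B (l' := List.ofFn (fun _ : Fin 1 => i) ++ _ ++ _)]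
  simp

theorem higherEulerLagrange_of_length_eq (hL : ContDiff ℝ (⊤ : ℕ∞) L0)
    (hLsymm : PermJetInvariant L0)
    (hΦ : ∀ B, ContDiff ℝ (⊤ : ℕ∞) (Φ B)) (B : Fin f) {l : List (Fin n)} (h : l.length = N)
    (x : Fin n → ℝ) : higherEulerLagrange L0 Φ B l x = dLdqList L0 Φ B l x := by
  have hzero : ∀ i : Fin n, higherEulerLagrange L0 Φ B (i :: l) = 0 := fun i =>
    funext (higherEulerLagrange_of_lt_length (by simp [h]) B)
  simp [higherEulerLagrange_eq_dLdqList_sub hL hLsymm hΦ, hzero, pd]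

end HigherEulerLagrange

section EnergyMomentum

variable {n f N : ℕ} {L0 : Jet n f N → ℝ} {Φ : Fin f → (Fin n → ℝ) → ℝ}

noncomputable def higherEulerPairing (L0 : Jet n f N → ℝ) (Φ : Fin f → (Fin n → ℝ) → ℝ)
    (B : Fin f) (σ : Fin n) (Z : ℕ) (x : Fin n → ℝ) : ℝ :=
  ∑ ν : Fin Z → Fin n, pds (σ :: List.ofFn ν) (Φ B) x * higherEulerLagrange L0 Φ B (List.ofFn ν) x

theorem higherEulerPairing_zero (B : Fin f) (σ : Fin n) (x : Fin n → ℝ) :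
    higherEulerPairing L0 Φ B σ 0 x = pd σ (Φ B) x * EulerLagrange (fun _ => L0) Φ B x := by
  simp [higherEulerPairing, higherEulerLagrange_nil, pds]

theorem sum_pd_higherEulerPairing_cons (hL : ContDiff ℝ (⊤ : ℕ∞) L0)
    (hLsymm : PermJetInvariant L0)
    (hΦ : ∀ B, ContDiff ℝ (⊤ : ℕ∞) (Φ B)) (B : Fin f) (σ : Fin n) (Z : ℕ) (x : Fin n → ℝ) :
    ∑ lam : Fin n, pd lam (fun y => ∑ ν : Fin Z → Fin n,
        pds (σ :: List.ofFn ν) (Φ B) y * higherEulerLagrange L0 Φ B (lam :: List.ofFn ν) y) x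
      = higherEulerPairing L0 Φ B σ (Z + 1) x - higherEulerPairing L0 Φ B σ Z x
        + ∑ ν : Fin Z → Fin n, pds (σ :: List.ofFn ν) (Φ B) x * dLdqList L0 Φ B (List.ofFn ν) x := by
  have hΦ' : ∀ l, Differentiable ℝ (pds l (Φ B)) :=
    fun l => (contDiff_pds (hΦ B) l).differentiable (by simp)
  have hM : ∀ l, Differentiable ℝ (higherEulerLagrange L0 Φ B l) :=
    fun l => (contDiff_higherEulerLagrange hL hΦ B l).differentiable (by simp)
  have hswap : ∀ (lam : Fin n) (ν : Fin Z → Fin n),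
      pd lam (pds (σ :: List.ofFn ν) (Φ B)) = pds (σ :: List.ofFn (Fin.cons lam ν)) (Φ B) := by
    intro lam ν
    rw [List.ofFn_cons]
    exact pd_comm (contDiff_pds (hΦ B) _) lam σ
  calc ∑ lam : Fin n, pd lam (fun y => ∑ ν : Fin Z → Fin n,
        pds (σ :: List.ofFn ν) (Φ B) y * higherEulerLagrange L0 Φ B (lam :: List.ofFn ν) y) x
      = ∑ lam : Fin n, ∑ ν : Fin Z → Fin n,
          (pds (σ :: List.ofFn (Fin.cons lam ν)) (Φ B) x
              * higherEulerLagrange L0 Φ B (List.ofFn (Fin.cons lam ν)) x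
            + pds (σ :: List.ofFn ν) (Φ B) x
              * pd lam (higherEulerLagrange L0 Φ B (lam :: List.ofFn ν)) x) := by
        refine Finset.sum_congr rfl fun lam _ => ?_
        rw [pd_sum _ fun ν => (hΦ' _).fun_mul (hM _)]
        refine Finset.sum_congr rfl fun ν _ => ?_
        rw [pd_mul (hΦ' _) (hM _), hswap, List.ofFn_cons]
    _ = higherEulerPairing L0 Φ B σ (Z + 1) x
        + ∑ ν : Fin Z → Fin n, pds (σ :: List.ofFn ν) (Φ B) x
            * (dLdqList L0 Φ B (List.ofFn ν) x - higherEulerLagrange L0 Φ B (List.ofFn ν) x) := by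
        simp only [Finset.sum_add_distrib]
        congr 1
        · rw [higherEulerPairing, sum_arrow_fin_succ]
        · rw [Finset.sum_comm]
          refine Finset.sum_congr rfl fun ν _ => ?_
          rw [← Finset.mul_sum, higherEulerLagrange_eq_dLdqList_sub hL hLsymm hΦ]
          ring
    _ = _ := by
        simp only [higherEulerPairing, mul_sub, Finset.sum_sub_distrib]
        ring

theorem pd_comp_jet_eq_sum (hL : ContDiff ℝ (⊤ : ℕ∞) L0) (hΦ : ∀ B, ContDiff ℝ (⊤ : ℕ∞) (Φ B))
    (σ : Fin n) (x : Fin n → ℝ) :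
    pd σ (fun y => L0 (jet Φ y)) x
      = ∑ B : Fin f, ∑ Z ∈ Finset.range (N + 1), ∑ ν : Fin Z → Fin n,
          pds (σ :: List.ofFn ν) (Φ B) x * dLdqList L0 Φ B (List.ofFn ν) x := by
  rw [pd_comp_jet hL hΦ, Fintype.sum_sigma]
  simp only [Fintype.sum_prod_type, ← dLdqList_ofFn]
  rw [Finset.sum_comm]
  exact Finset.sum_congr rfl fun B _ => Fin.sum_univ_eq_sum_range (fun Z => ∑ ν : Fin Z → Fin n,
    pds (σ :: List.ofFn ν) (Φ B) x * dLdqList L0 Φ B (List.ofFn ν) x) _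

theorem contDiff_Kcur (hL : ContDiff ℝ (⊤ : ℕ∞) L0) (hΦ : ∀ B, ContDiff ℝ (⊤ : ℕ∞) (Φ B))
    (B : Fin f) (i : Fin n) (Z : Fin N) (ν : Fin Z → Fin n) :
    ContDiff ℝ (⊤ : ℕ∞) (Kcur (fun _ => L0) Φ B i Z ν) :=
  ContDiff.sum fun _ _ => ContDiff.sum fun _ _ =>
    contDiff_const.mul (contDiff_pds (contDiff_dLdq hL hΦ _) _)

theorem sum_pd_sum_mul_Kcur (hL : ContDiff ℝ (⊤ : ℕ∞) L0)
    (hLsymm : PermJetInvariant L0)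
    (hΦ : ∀ B, ContDiff ℝ (⊤ : ℕ∞) (Φ B)) (B : Fin f) (σ : Fin n) (x : Fin n → ℝ) :
    ∑ lam : Fin n, pd lam (fun y => ∑ Z : Fin N, ∑ ν : Fin Z → Fin n,
        pds (σ :: List.ofFn ν) (Φ B) y * Kcur (fun _ => L0) Φ B lam Z ν y) x
      = ∑ Z ∈ Finset.range (N + 1), ∑ ν : Fin Z → Fin n,
            pds (σ :: List.ofFn ν) (Φ B) x * dLdqList L0 Φ B (List.ofFn ν) x
        - pd σ (Φ B) x * EulerLagrange (fun _ => L0) Φ B x := by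
  set S : ℕ → ℝ := fun Z => ∑ ν : Fin Z → Fin n,
    pds (σ :: List.ofFn ν) (Φ B) x * dLdqList L0 Φ B (List.ofFn ν) x
  set g : ℕ → ℝ := fun Z => higherEulerPairing L0 Φ B σ Z x
  have hg : g N = S N := Finset.sum_congr rfl fun ν _ => by
    rw [higherEulerLagrange_of_length_eq hL hLsymm hΦ B (List.length_ofFn)]
  have hdiff : ∀ (lam : Fin n) (Z : ℕ), Differentiable ℝ (fun y => ∑ ν : Fin Z → Fin n,
      pds (σ :: List.ofFn ν) (Φ B) y * higherEulerLagrange L0 Φ B (lam :: List.ofFn ν) y) :=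
    fun lam Z => Differentiable.fun_sum fun ν _ =>
      ((contDiff_pds (hΦ B) _).differentiable (by simp)).fun_mul
        ((contDiff_higherEulerLagrange hL hΦ B _).differentiable (by simp))
  simp only [← higherEulerLagrange_cons_ofFn hLsymm hΦ]
  calc ∑ lam : Fin n, pd lam (fun y => ∑ Z : Fin N, ∑ ν : Fin Z → Fin n,
        pds (σ :: List.ofFn ν) (Φ B) y * higherEulerLagrange L0 Φ B (lam :: List.ofFn ν) y) x
      = ∑ Z : Fin N, (g (Z + 1) - g Z + S Z) := by
        rw [Finset.sum_congr rfl fun lam _ => pd_sum _ (fun Z : Fin N => hdiff lam Z) lam x,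
          Finset.sum_comm]
        exact Finset.sum_congr rfl fun Z _ => sum_pd_higherEulerPairing_cons hL hLsymm hΦ B σ Z x
    _ = g N - g 0 + ∑ Z ∈ Finset.range N, S Z := by
        rw [Fin.sum_univ_eq_sum_range (fun Z => g (Z + 1) - g Z + S Z), Finset.sum_add_distrib,
          Finset.sum_range_sub]
    _ = _ := by
        rw [Finset.sum_range_succ, hg, show g 0 = _ from higherEulerPairing_zero B σ x]
        ring

noncomputable def canonicalEnergyMomentum (L0 : Jet n f N → ℝ) (Φ : Fin f → (Fin n → ℝ) → ℝ)
    (lam σ : Fin n) (x : Fin n → ℝ) : ℝ :=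
  (if lam = σ then L0 (jet Φ x) else 0)
    - ∑ B : Fin f, ∑ Z : Fin N, ∑ ν : Fin (Z : ℕ) → Fin n,
        pds (σ :: List.ofFn ν) (Φ B) x * Kcur (fun _ => L0) Φ B lam Z ν x

theorem sum_pd_canonicalEnergyMomentum (hL : ContDiff ℝ (⊤ : ℕ∞) L0)
    (hLsymm : PermJetInvariant L0)
    (hΦ : ∀ B, ContDiff ℝ (⊤ : ℕ∞) (Φ B)) (x : Fin n → ℝ) (σ : Fin n) :
    ∑ lam : Fin n, pd lam (canonicalEnergyMomentum L0 Φ lam σ) x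
      = ∑ B : Fin f, pd σ (Φ B) x * EulerLagrange (fun _ => L0) Φ B x := by
  have hLjet : Differentiable ℝ (fun y => L0 (jet Φ y)) :=
    (hL.comp (contDiff_jet hΦ)).differentiable (by simp)
  have hflux : ∀ lam : Fin n, ∀ B, Differentiable ℝ (fun y => ∑ Z : Fin N, ∑ ν : Fin Z → Fin n,
      pds (σ :: List.ofFn ν) (Φ B) y * Kcur (fun _ => L0) Φ B lam Z ν y) :=
    fun lam B => Differentiable.fun_sum fun Z _ => Differentiable.fun_sum fun ν _ =>
      ((contDiff_pds (hΦ B) _).differentiable (by simp)).fun_mul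
        ((contDiff_Kcur hL hΦ B lam Z ν).differentiable (by simp))
  have hdelta : ∑ lam : Fin n, pd lam (fun y => if lam = σ then L0 (jet Φ y) else 0) x
      = pd σ (fun y => L0 (jet Φ y)) x := by
    rw [Finset.sum_eq_single σ (fun lam _ h => by simp [h, pd]) (by simp)]
    simp
  calc ∑ lam : Fin n, pd lam (canonicalEnergyMomentum L0 Φ lam σ) x
      = pd σ (fun y => L0 (jet Φ y)) x
          - ∑ B : Fin f, ∑ lam : Fin n, pd lam (fun y => ∑ Z : Fin N, ∑ ν : Fin Z → Fin n,
              pds (σ :: List.ofFn ν) (Φ B) y * Kcur (fun _ => L0) Φ B lam Z ν y) x := by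
        rw [← hdelta, Finset.sum_comm, ← Finset.sum_sub_distrib]
        refine Finset.sum_congr rfl fun lam _ => ?_
        rw [← pd_sum _ (hflux lam) lam x]
        refine pd_sub ?_ (Differentiable.fun_sum fun B _ => hflux lam B) lam x
        by_cases h : lam = σ <;> simp [h, hLjet]
    _ = _ := by
        rw [pd_comp_jet_eq_sum hL hΦ, Finset.sum_congr rfl fun B _ =>
          sum_pd_sum_mul_Kcur hL hLsymm hΦ B σ x, Finset.sum_sub_distrib, sub_sub_cancel]

end EnergyMomentum

theorem canonical_energy_momentum_conserved_general {n f N : ℕ}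
    (L0 : Jet n f N → ℝ) (hL : ContDiff ℝ (⊤ : ℕ∞) L0)
    (hLsymm : ∀ (q : Jet n f N) (X : Fin (N + 1)) (σ : Equiv.Perm (Fin (X : ℕ))),
      L0 (permJet X σ q) = L0 q)
    (Φ : Fin f → (Fin n → ℝ) → ℝ) (hΦ : ∀ B, ContDiff ℝ (⊤ : ℕ∞) (Φ B))
    (hEL : ∀ (B : Fin f) (x : Fin n → ℝ), EulerLagrange (fun _ => L0) Φ B x = 0) :
    ∀ (x : Fin n → ℝ) (σ : Fin n),
      ∑ lam : Fin n,
        pd lam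
          (fun x' =>
            (if lam = σ then L0 (jet Φ x') else 0)
              - ∑ B : Fin f, ∑ Z : Fin N, ∑ nu : Fin (Z : ℕ) → Fin n,
                  pds (σ :: List.ofFn nu) (Φ B) x'
                    * Kcur (fun _ => L0) Φ B lam Z nu x') x
        = 0 := fun x σ =>
  (sum_pd_canonicalEnergyMomentum hL hLsymm hΦ x σ).trans (by simp [hEL])

/-- equations (30)–(31) of the paper: if the Lagrangian does not
depend explicitly on the coordinates and `Φ` solves the Euler–Lagrange equations,
then the canonical energy–momentum `τ^λ_σ` is divergence free. -/
theorem canonical_energy_momentum_conserved {n f N : ℕ} (hn : 2 ≤ n) (hf : 1 ≤ f)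
    (hN : 1 ≤ N)
    (L0 : Jet n f N → ℝ) (hL : ContDiff ℝ (⊤ : ℕ∞) L0)
    (hLsymm : ∀ (q : Jet n f N) (X : Fin (N + 1)) (σ : Equiv.Perm (Fin (X : ℕ))),
      L0 (permJet X σ q) = L0 q)
    (Φ : Fin f → (Fin n → ℝ) → ℝ) (hΦ : ∀ B, ContDiff ℝ (⊤ : ℕ∞) (Φ B))
    (hEL : ∀ (B : Fin f) (x : Fin n → ℝ), EulerLagrange (fun _ => L0) Φ B x = 0) :
    ∀ (x : Fin n → ℝ) (σ : Fin n),
      ∑ lam : Fin n,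
        pd lam
          (fun x' =>
            (if lam = σ then L0 (jet Φ x') else 0)
              - ∑ B : Fin f, ∑ Z : Fin N, ∑ nu : Fin (Z : ℕ) → Fin n,
                  pds (σ :: List.ofFn nu) (Φ B) x'
                    * Kcur (fun _ => L0) Φ B lam Z nu x') x
        = 0 :=
  canonical_energy_momentum_conserved_general L0 hL hLsymm Φ hΦ hEL
end

section
/- Derivative of the coordinate scalar curvature with respect to the first-derivative variables (equation (B5)). Let g be an invertible symmetric real 4×4 matrix with inverse entries g^{αβ}, and let h = (h_{μ,αβ}) and δh = (δh_{μ,αβ}) be families of real numbers symmetric under α↔β (representing ∂_μ g_{αβ} and its variation). Define the first-order part of the coordinate scalar curvature R₁(g,h) := Σ g^{αβ}g^{ρσ}g^{ξη}( h_{α,βρ} h_{σ,ξη} + (3/4) h_{α,ρξ} h_{β,ση} − (1/4) h_{ξ,αβ} h_{η,ρσ} − (1/2) h_{ρ,αξ} h_{η,βσ} − h_{α,βρ} h_{ξ,ση} ). Then the directional derivative of R₁ in h in the direction δh satisfies d/dt|_{t=0} R₁(g, h + t·δh) = Σ_{κ,α,β} δh_{κ,αβ} Σ_{μ,ξ,η}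 h_{μ,ξη} B^{καβμξη}, where B^{καβμξη} := g^{ακ}g^{βμ}g^{ξη} + g^{αβ}g^{κξ}g^{μη} + (3/2) g^{αξ}g^{βη}g^{κμ} − (1/2) g^{αβ}g^{κμ}g^{ξη} − g^{αξ}g^{βμ}g^{κη} − g^{ακ}g^{βξ}g^{μη} − g^{αξ}g^{βκ}g^{μη}, all repeated indices summed over {0,1,2,3}. -/
open scoped BigOperators

/-- The first-order part of the coordinate expression of the Ricci scalar curvature
(equation (B3) of the paper), with `h μ α β` standing for `∂_μ g_{αβ}`. -/
noncomputable def R1 (g : Matrix (Fin 4) (Fin 4) ℝ)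
    (h : Fin 4 → Fin 4 → Fin 4 → ℝ) : ℝ :=
  ∑ α : Fin 4, ∑ β : Fin 4, ∑ ρ : Fin 4, ∑ σ : Fin 4, ∑ ξ : Fin 4, ∑ η : Fin 4,
    g⁻¹ α β * g⁻¹ ρ σ * g⁻¹ ξ η *
      (h α β ρ * h σ ξ η + (3 / 4 : ℝ) * h α ρ ξ * h β σ η
        - (1 / 4 : ℝ) * h ξ α β * h η ρ σ
        - (1 / 2 : ℝ) * h ρ α ξ * h η β σ
        - h α β ρ * h ξ σ η)

/-- The coefficient `B^{καβμξη}` of equation (B5) of the paper. -/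
noncomputable def Bco (g : Matrix (Fin 4) (Fin 4) ℝ) (κ α β μ ξ η : Fin 4) : ℝ :=
  g⁻¹ α κ * g⁻¹ β μ * g⁻¹ ξ η + g⁻¹ α β * g⁻¹ κ ξ * g⁻¹ μ η
    + (3 / 2 : ℝ) * g⁻¹ α ξ * g⁻¹ β η * g⁻¹ κ μ
    - (1 / 2 : ℝ) * g⁻¹ α β * g⁻¹ κ μ * g⁻¹ ξ η
    - g⁻¹ α ξ * g⁻¹ β μ * g⁻¹ κ η
    - g⁻¹ α κ * g⁻¹ β ξ * g⁻¹ μ η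
    - g⁻¹ α ξ * g⁻¹ β κ * g⁻¹ μ η


set_option maxHeartbeats 1000000

abbrev I6 := Fin 4 × Fin 4 × Fin 4 × Fin 4 × Fin 4 × Fin 4

private lemma sum6_prod (f : Fin 4 → Fin 4 → Fin 4 → Fin 4 → Fin 4 → Fin 4 → ℝ) :
    (∑ x : I6, f x.1 x.2.1 x.2.2.1 x.2.2.2.1 x.2.2.2.2.1 x.2.2.2.2.2)
      = ∑ a : Fin 4, ∑ b : Fin 4, ∑ c : Fin 4, ∑ d : Fin 4, ∑ i : Fin 4, ∑ j : Fin 4,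
          f a b c d i j := by
  simp [Fintype.sum_prod_type]

private lemma sum6_bij (e : I6 → I6) (he : Function.Bijective e)
    (f g : Fin 4 → Fin 4 → Fin 4 → Fin 4 → Fin 4 → Fin 4 → ℝ)
    (hfg : ∀ a b c d i j, f a b c d i j
      = g (e (a,b,c,d,i,j)).1 (e (a,b,c,d,i,j)).2.1 (e (a,b,c,d,i,j)).2.2.1
          (e (a,b,c,d,i,j)).2.2.2.1 (e (a,b,c,d,i,j)).2.2.2.2.1 (e (a,b,c,d,i,j)).2.2.2.2.2) :
    (∑ a : Fin 4, ∑ b : Fin 4, ∑ c : Fin 4, ∑ d : Fin 4, ∑ i : Fin 4, ∑ j : Fin 4, f a b c d i j)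
      = ∑ a : Fin 4, ∑ b : Fin 4, ∑ c : Fin 4, ∑ d : Fin 4, ∑ i : Fin 4, ∑ j : Fin 4,
          g a b c d i j := by
  rw [← sum6_prod f, ← sum6_prod g]
  exact Fintype.sum_bijective e he _ _ (fun ⟨a,b,c,d,i,j⟩ => hfg a b c d i j)

private lemma deriv_quad (A B C : ℝ) : deriv (fun t : ℝ => A + B * t + C * t ^ 2) 0 = B := by
  have hb : HasDerivAt (fun t : ℝ => B * t) B 0 := by
    simpa using (hasDerivAt_id (0:ℝ)).const_mul B
  have hc : HasDerivAt (fun t : ℝ => C * t ^ 2) (C * (2 * 0)) 0 := by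
    simpa using (hasDerivAt_pow 2 (0:ℝ)).const_mul C
  have hh : HasDerivAt (fun t : ℝ => A + B * t + C * t ^ 2) (B + C * (2 * 0)) 0 :=
    ((hb.const_add A).add hc)
  simpa using hh.deriv

/-- equation (B5) of the paper: the directional derivative of the
first-order part `R₁` of the coordinate scalar curvature in the first-derivative
variables `h` in the direction `δh` is `δh_{κ,αβ} · (∂_μ g_{ξη}) B^{καβμξη}`. -/
theorem dR_d_first_derivatives (g : Matrix (Fin 4) (Fin 4) ℝ)
    (hg : IsUnit g.det) (hgsymm : g.IsSymm)
    (h dh : Fin 4 → Fin 4 → Fin 4 → ℝ)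
    (hsymm : ∀ μ α β, h μ α β = h μ β α)
    (dhsymm : ∀ μ α β, dh μ α β = dh μ β α) :
    deriv (fun t : ℝ => R1 g (fun μ α β => h μ α β + t * dh μ α β)) 0
      = ∑ κ : Fin 4, ∑ α : Fin 4, ∑ β : Fin 4,
          dh κ α β * ∑ μ : Fin 4, ∑ ξ : Fin 4, ∑ η : Fin 4,
            h μ ξ η * Bco g κ α β μ ξ η := by
  have hginv : (g⁻¹).IsSymm := by
    unfold Matrix.IsSymm
    rw [Matrix.transpose_nonsing_inv, hgsymm.eq]
  have Gs : ∀ i j : Fin 4, g⁻¹ i j = g⁻¹ j i := fun i j => hginv.apply j i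
  have hF : (fun t : ℝ => R1 g (fun μ α β => h μ α β + t * dh μ α β))
      = (fun t : ℝ => (∑ α : Fin 4, ∑ β : Fin 4, ∑ ρ : Fin 4, ∑ σ : Fin 4, ∑ ξ : Fin 4, ∑ η : Fin 4,
        g⁻¹ α β * g⁻¹ ρ σ * g⁻¹ ξ η * (h α β ρ * h σ ξ η + (3/4 : ℝ) * (h α ρ ξ * h β σ η) - (1/4 : ℝ) * (h ξ α β * h η ρ σ) - (1/2 : ℝ) * (h ρ α ξ * h η β σ) - h α β ρ * h ξ σ η))
        + (∑ α : Fin 4, ∑ β : Fin 4, ∑ ρ : Fin 4, ∑ σ : Fin 4, ∑ ξ : Fin 4, ∑ η : Fin 4,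
        (g⁻¹ α β * g⁻¹ ρ σ * g⁻¹ ξ η * ((dh α β ρ * h σ ξ η))
          + g⁻¹ α β * g⁻¹ ρ σ * g⁻¹ ξ η * ((h α β ρ * dh σ ξ η))
          + g⁻¹ α β * g⁻¹ ρ σ * g⁻¹ ξ η * ((3/4 : ℝ) * (dh α ρ ξ * h β σ η))
          + g⁻¹ α β * g⁻¹ ρ σ * g⁻¹ ξ η * ((3/4 : ℝ) * (h α ρ ξ * dh β σ η))
          - g⁻¹ α β * g⁻¹ ρ σ * g⁻¹ ξ η * ((1/4 : ℝ) * (dh ξ α β * h η ρ σ))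
          - g⁻¹ α β * g⁻¹ ρ σ * g⁻¹ ξ η * ((1/4 : ℝ) * (h ξ α β * dh η ρ σ))
          - g⁻¹ α β * g⁻¹ ρ σ * g⁻¹ ξ η * ((1/2 : ℝ) * (dh ρ α ξ * h η β σ))
          - g⁻¹ α β * g⁻¹ ρ σ * g⁻¹ ξ η * ((1/2 : ℝ) * (h ρ α ξ * dh η β σ))
          - g⁻¹ α β * g⁻¹ ρ σ * g⁻¹ ξ η * ((dh α β ρ * h ξ σ η))
          - g⁻¹ α β * g⁻¹ ρ σ * g⁻¹ ξ η * ((h α β ρ * dh ξ σ η)))) * t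
        + (∑ α : Fin 4, ∑ β : Fin 4, ∑ ρ : Fin 4, ∑ σ : Fin 4, ∑ ξ : Fin 4, ∑ η : Fin 4,
        g⁻¹ α β * g⁻¹ ρ σ * g⁻¹ ξ η * (dh α β ρ * dh σ ξ η + (3/4 : ℝ) * (dh α ρ ξ * dh β σ η) - (1/4 : ℝ) * (dh ξ α β * dh η ρ σ) - (1/2 : ℝ) * (dh ρ α ξ * dh η β σ) - dh α β ρ * dh ξ σ η)) * t ^ 2) := by
    funext t
    simp only [R1]
    have h1 : (∑ α : Fin 4, ∑ β : Fin 4, ∑ ρ : Fin 4, ∑ σ : Fin 4, ∑ ξ : Fin 4, ∑ η : Fin 4,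
        g⁻¹ α β * g⁻¹ ρ σ * g⁻¹ ξ η *
          ((h α β ρ + t * dh α β ρ) * (h σ ξ η + t * dh σ ξ η)
            + (3 / 4 : ℝ) * (h α ρ ξ + t * dh α ρ ξ) * (h β σ η + t * dh β σ η)
            - (1 / 4 : ℝ) * (h ξ α β + t * dh ξ α β) * (h η ρ σ + t * dh η ρ σ)
            - (1 / 2 : ℝ) * (h ρ α ξ + t * dh ρ α ξ) * (h η β σ + t * dh η β σ)
            - (h α β ρ + t * dh α β ρ) * (h ξ σ η + t * dh ξ σ η)))
      = ∑ α : Fin 4, ∑ β : Fin 4, ∑ ρ : Fin 4, ∑ σ : Fin 4, ∑ ξ : Fin 4, ∑ η : Fin 4,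
        (g⁻¹ α β * g⁻¹ ρ σ * g⁻¹ ξ η * (h α β ρ * h σ ξ η + (3/4 : ℝ) * (h α ρ ξ * h β σ η) - (1/4 : ℝ) * (h ξ α β * h η ρ σ) - (1/2 : ℝ) * (h ρ α ξ * h η β σ) - h α β ρ * h ξ σ η)
          + (g⁻¹ α β * g⁻¹ ρ σ * g⁻¹ ξ η * ((dh α β ρ * h σ ξ η))
          + g⁻¹ α β * g⁻¹ ρ σ * g⁻¹ ξ η * ((h α β ρ * dh σ ξ η))
          + g⁻¹ α β * g⁻¹ ρ σ * g⁻¹ ξ η * ((3/4 : ℝ) * (dh α ρ ξ * h β σ η))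
          + g⁻¹ α β * g⁻¹ ρ σ * g⁻¹ ξ η * ((3/4 : ℝ) * (h α ρ ξ * dh β σ η))
          - g⁻¹ α β * g⁻¹ ρ σ * g⁻¹ ξ η * ((1/4 : ℝ) * (dh ξ α β * h η ρ σ))
          - g⁻¹ α β * g⁻¹ ρ σ * g⁻¹ ξ η * ((1/4 : ℝ) * (h ξ α β * dh η ρ σ))
          - g⁻¹ α β * g⁻¹ ρ σ * g⁻¹ ξ η * ((1/2 : ℝ) * (dh ρ α ξ * h η β σ))
          - g⁻¹ α β * g⁻¹ ρ σ * g⁻¹ ξ η * ((1/2 : ℝ) * (h ρ α ξ * dh η β σ))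
          - g⁻¹ α β * g⁻¹ ρ σ * g⁻¹ ξ η * ((dh α β ρ * h ξ σ η))
          - g⁻¹ α β * g⁻¹ ρ σ * g⁻¹ ξ η * ((h α β ρ * dh ξ σ η))) * t
          + g⁻¹ α β * g⁻¹ ρ σ * g⁻¹ ξ η * (dh α β ρ * dh σ ξ η + (3/4 : ℝ) * (dh α ρ ξ * dh β σ η) - (1/4 : ℝ) * (dh ξ α β * dh η ρ σ) - (1/2 : ℝ) * (dh ρ α ξ * dh η β σ) - dh α β ρ * dh ξ σ η) * t ^ 2) := by
      refine Finset.sum_congr rfl fun α _ => Finset.sum_congr rfl fun β _ =>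
      Finset.sum_congr rfl fun ρ _ => Finset.sum_congr rfl fun σ _ =>
      Finset.sum_congr rfl fun ξ _ => Finset.sum_congr rfl fun η _ => ?_
      ring
    rw [h1]
    simp only [Finset.sum_add_distrib, ← Finset.sum_mul]
  rw [hF, deriv_quad]
  have hR : (∑ κ : Fin 4, ∑ α : Fin 4, ∑ β : Fin 4,
          dh κ α β * ∑ μ : Fin 4, ∑ ξ : Fin 4, ∑ η : Fin 4,
            h μ ξ η * Bco g κ α β μ ξ η)
      = ∑ α : Fin 4, ∑ β : Fin 4, ∑ ρ : Fin 4, ∑ σ : Fin 4, ∑ ξ : Fin 4, ∑ η : Fin 4,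
          (dh α β ρ * h σ ξ η * (g⁻¹ β α * g⁻¹ ρ σ * g⁻¹ ξ η)
          + dh α β ρ * h σ ξ η * (g⁻¹ β ρ * g⁻¹ α ξ * g⁻¹ σ η)
          + dh α β ρ * h σ ξ η * ((3/4 : ℝ) * (g⁻¹ β ξ * g⁻¹ ρ η * g⁻¹ α σ))
          + dh α β ρ * h σ ξ η * ((3/4 : ℝ) * (g⁻¹ β ξ * g⁻¹ ρ η * g⁻¹ α σ))
          - dh α β ρ * h σ ξ η * ((1/4 : ℝ) * (g⁻¹ β ρ * g⁻¹ α σ * g⁻¹ ξ η))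
          - dh α β ρ * h σ ξ η * ((1/4 : ℝ) * (g⁻¹ β ρ * g⁻¹ α σ * g⁻¹ ξ η))
          - dh α β ρ * h σ ξ η * ((1/2 : ℝ) * (g⁻¹ β ξ * g⁻¹ ρ σ * g⁻¹ α η))
          - dh α β ρ * h σ ξ η * ((1/2 : ℝ) * (g⁻¹ β ξ * g⁻¹ ρ σ * g⁻¹ α η))
          - dh α β ρ * h σ ξ η * (g⁻¹ β α * g⁻¹ ρ ξ * g⁻¹ σ η)
          - dh α β ρ * h σ ξ η * (g⁻¹ β ξ * g⁻¹ ρ α * g⁻¹ σ η)) := by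
    simp only [Bco, Finset.mul_sum]
    refine Finset.sum_congr rfl fun α _ => Finset.sum_congr rfl fun β _ =>
      Finset.sum_congr rfl fun ρ _ => Finset.sum_congr rfl fun σ _ =>
      Finset.sum_congr rfl fun ξ _ => Finset.sum_congr rfl fun η _ => ?_
    ring
  rw [hR]
  have e1 : (∑ α : Fin 4, ∑ β : Fin 4, ∑ ρ : Fin 4, ∑ σ : Fin 4, ∑ ξ : Fin 4, ∑ η : Fin 4,
          g⁻¹ α β * g⁻¹ ρ σ * g⁻¹ ξ η * ((dh α β ρ * h σ ξ η)))
      = (∑ α : Fin 4, ∑ β : Fin 4, ∑ ρ : Fin 4, ∑ σ : Fin 4, ∑ ξ : Fin 4, ∑ η : Fin 4,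
          dh α β ρ * h σ ξ η * (g⁻¹ β α * g⁻¹ ρ σ * g⁻¹ ξ η)) := by
    refine sum6_bij (fun x : I6 => (x.1, x.2.1, x.2.2.1, x.2.2.2.1, x.2.2.2.2.1, x.2.2.2.2.2))
      (Function.bijective_iff_has_inverse.mpr ⟨fun x : I6 => (x.1, x.2.1, x.2.2.1, x.2.2.2.1, x.2.2.2.2.1, x.2.2.2.2.2), fun x => rfl, fun x => rfl⟩) _ _ ?_
    · intro α β ρ σ ξ η
      dsimp only
      rw [Gs β α]
      ring
  have e2 : (∑ α : Fin 4, ∑ β : Fin 4, ∑ ρ : Fin 4, ∑ σ : Fin 4, ∑ ξ : Fin 4, ∑ η : Fin 4,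
          g⁻¹ α β * g⁻¹ ρ σ * g⁻¹ ξ η * ((h α β ρ * dh σ ξ η)))
      = (∑ α : Fin 4, ∑ β : Fin 4, ∑ ρ : Fin 4, ∑ σ : Fin 4, ∑ ξ : Fin 4, ∑ η : Fin 4,
          dh α β ρ * h σ ξ η * (g⁻¹ β ρ * g⁻¹ α ξ * g⁻¹ σ η)) := by
    refine sum6_bij (fun x : I6 => (x.2.2.2.1, x.2.2.2.2.1, x.2.2.2.2.2, x.1, x.2.2.1, x.2.1))
      (Function.bijective_iff_has_inverse.mpr ⟨fun x : I6 => (x.2.2.2.1, x.2.2.2.2.2, x.2.2.2.2.1, x.1, x.2.1, x.2.2.1), fun x => rfl, fun x => rfl⟩) _ _ ?_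
    · intro α β ρ σ ξ η
      dsimp only
      rw [hsymm α ρ β, Gs σ ρ]
      ring
  have e3 : (∑ α : Fin 4, ∑ β : Fin 4, ∑ ρ : Fin 4, ∑ σ : Fin 4, ∑ ξ : Fin 4, ∑ η : Fin 4,
          g⁻¹ α β * g⁻¹ ρ σ * g⁻¹ ξ η * ((3/4 : ℝ) * (dh α ρ ξ * h β σ η)))
      = (∑ α : Fin 4, ∑ β : Fin 4, ∑ ρ : Fin 4, ∑ σ : Fin 4, ∑ ξ : Fin 4, ∑ η : Fin 4,
          dh α β ρ * h σ ξ η * ((3/4 : ℝ) * (g⁻¹ β ξ * g⁻¹ ρ η * g⁻¹ α σ))) := by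
    refine sum6_bij (fun x : I6 => (x.1, x.2.2.1, x.2.2.2.2.1, x.2.1, x.2.2.2.1, x.2.2.2.2.2))
      (Function.bijective_iff_has_inverse.mpr ⟨fun x : I6 => (x.1, x.2.2.2.1, x.2.1, x.2.2.2.2.1, x.2.2.1, x.2.2.2.2.2), fun x => rfl, fun x => rfl⟩) _ _ ?_
    · intro α β ρ σ ξ η
      dsimp only
      skip
      ring
  have e4 : (∑ α : Fin 4, ∑ β : Fin 4, ∑ ρ : Fin 4, ∑ σ : Fin 4, ∑ ξ : Fin 4, ∑ η : Fin 4,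
          g⁻¹ α β * g⁻¹ ρ σ * g⁻¹ ξ η * ((3/4 : ℝ) * (h α ρ ξ * dh β σ η)))
      = (∑ α : Fin 4, ∑ β : Fin 4, ∑ ρ : Fin 4, ∑ σ : Fin 4, ∑ ξ : Fin 4, ∑ η : Fin 4,
          dh α β ρ * h σ ξ η * ((3/4 : ℝ) * (g⁻¹ β ξ * g⁻¹ ρ η * g⁻¹ α σ))) := by
    refine sum6_bij (fun x : I6 => (x.2.1, x.2.2.2.1, x.2.2.2.2.2, x.1, x.2.2.1, x.2.2.2.2.1))
      (Function.bijective_iff_has_inverse.mpr ⟨fun x : I6 => (x.2.2.2.1, x.1, x.2.2.2.2.1, x.2.1, x.2.2.2.2.2, x.2.2.1), fun x => rfl, fun x => rfl⟩) _ _ ?_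
    · intro α β ρ σ ξ η
      dsimp only
      rw [Gs σ ρ, Gs η ξ, Gs β α]
      ring
  have e5 : (∑ α : Fin 4, ∑ β : Fin 4, ∑ ρ : Fin 4, ∑ σ : Fin 4, ∑ ξ : Fin 4, ∑ η : Fin 4,
          g⁻¹ α β * g⁻¹ ρ σ * g⁻¹ ξ η * ((1/4 : ℝ) * (dh ξ α β * h η ρ σ)))
      = (∑ α : Fin 4, ∑ β : Fin 4, ∑ ρ : Fin 4, ∑ σ : Fin 4, ∑ ξ : Fin 4, ∑ η : Fin 4,
          dh α β ρ * h σ ξ η * ((1/4 : ℝ) * (g⁻¹ β ρ * g⁻¹ α σ * g⁻¹ ξ η))) := by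
    refine sum6_bij (fun x : I6 => (x.2.2.2.2.1, x.1, x.2.1, x.2.2.2.2.2, x.2.2.1, x.2.2.2.1))
      (Function.bijective_iff_has_inverse.mpr ⟨fun x : I6 => (x.2.1, x.2.2.1, x.2.2.2.2.1, x.2.2.2.2.2, x.1, x.2.2.2.1), fun x => rfl, fun x => rfl⟩) _ _ ?_
    · intro α β ρ σ ξ η
      dsimp only
      skip
      ring
  have e6 : (∑ α : Fin 4, ∑ β : Fin 4, ∑ ρ : Fin 4, ∑ σ : Fin 4, ∑ ξ : Fin 4, ∑ η : Fin 4,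
          g⁻¹ α β * g⁻¹ ρ σ * g⁻¹ ξ η * ((1/4 : ℝ) * (h ξ α β * dh η ρ σ)))
      = (∑ α : Fin 4, ∑ β : Fin 4, ∑ ρ : Fin 4, ∑ σ : Fin 4, ∑ ξ : Fin 4, ∑ η : Fin 4,
          dh α β ρ * h σ ξ η * ((1/4 : ℝ) * (g⁻¹ β ρ * g⁻¹ α σ * g⁻¹ ξ η))) := by
    refine sum6_bij (fun x : I6 => (x.2.2.2.2.2, x.2.2.1, x.2.2.2.1, x.2.2.2.2.1, x.1, x.2.1))
      (Function.bijective_iff_has_inverse.mpr ⟨fun x : I6 => (x.2.2.2.2.1, x.2.2.2.2.2, x.2.1, x.2.2.1, x.2.2.2.1, x.1), fun x => rfl, fun x => rfl⟩) _ _ ?_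
    · intro α β ρ σ ξ η
      dsimp only
      rw [Gs η ξ]
      ring
  have e7 : (∑ α : Fin 4, ∑ β : Fin 4, ∑ ρ : Fin 4, ∑ σ : Fin 4, ∑ ξ : Fin 4, ∑ η : Fin 4,
          g⁻¹ α β * g⁻¹ ρ σ * g⁻¹ ξ η * ((1/2 : ℝ) * (dh ρ α ξ * h η β σ)))
      = (∑ α : Fin 4, ∑ β : Fin 4, ∑ ρ : Fin 4, ∑ σ : Fin 4, ∑ ξ : Fin 4, ∑ η : Fin 4,
          dh α β ρ * h σ ξ η * ((1/2 : ℝ) * (g⁻¹ β ξ * g⁻¹ ρ σ * g⁻¹ α η))) := by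
    refine sum6_bij (fun x : I6 => (x.2.2.1, x.1, x.2.2.2.2.1, x.2.2.2.2.2, x.2.1, x.2.2.2.1))
      (Function.bijective_iff_has_inverse.mpr ⟨fun x : I6 => (x.2.1, x.2.2.2.2.1, x.1, x.2.2.2.2.2, x.2.2.1, x.2.2.2.1), fun x => rfl, fun x => rfl⟩) _ _ ?_
    · intro α β ρ σ ξ η
      dsimp only
      skip
      ring
  have e8 : (∑ α : Fin 4, ∑ β : Fin 4, ∑ ρ : Fin 4, ∑ σ : Fin 4, ∑ ξ : Fin 4, ∑ η : Fin 4,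
          g⁻¹ α β * g⁻¹ ρ σ * g⁻¹ ξ η * ((1/2 : ℝ) * (h ρ α ξ * dh η β σ)))
      = (∑ α : Fin 4, ∑ β : Fin 4, ∑ ρ : Fin 4, ∑ σ : Fin 4, ∑ ξ : Fin 4, ∑ η : Fin 4,
          dh α β ρ * h σ ξ η * ((1/2 : ℝ) * (g⁻¹ β ξ * g⁻¹ ρ σ * g⁻¹ α η))) := by
    refine sum6_bij (fun x : I6 => (x.2.2.2.2.2, x.2.1, x.2.2.2.1, x.2.2.1, x.1, x.2.2.2.2.1))
      (Function.bijective_iff_has_inverse.mpr ⟨fun x : I6 => (x.2.2.2.2.1, x.2.1, x.2.2.2.1, x.2.2.1, x.2.2.2.2.2, x.1), fun x => rfl, fun x => rfl⟩) _ _ ?_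
    · intro α β ρ σ ξ η
      dsimp only
      rw [Gs β α, Gs σ ρ, Gs η ξ]
      ring
  have e9 : (∑ α : Fin 4, ∑ β : Fin 4, ∑ ρ : Fin 4, ∑ σ : Fin 4, ∑ ξ : Fin 4, ∑ η : Fin 4,
          g⁻¹ α β * g⁻¹ ρ σ * g⁻¹ ξ η * ((dh α β ρ * h ξ σ η)))
      = (∑ α : Fin 4, ∑ β : Fin 4, ∑ ρ : Fin 4, ∑ σ : Fin 4, ∑ ξ : Fin 4, ∑ η : Fin 4,
          dh α β ρ * h σ ξ η * (g⁻¹ β α * g⁻¹ ρ ξ * g⁻¹ σ η)) := by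
    refine sum6_bij (fun x : I6 => (x.1, x.2.1, x.2.2.1, x.2.2.2.2.1, x.2.2.2.1, x.2.2.2.2.2))
      (Function.bijective_iff_has_inverse.mpr ⟨fun x : I6 => (x.1, x.2.1, x.2.2.1, x.2.2.2.2.1, x.2.2.2.1, x.2.2.2.2.2), fun x => rfl, fun x => rfl⟩) _ _ ?_
    · intro α β ρ σ ξ η
      dsimp only
      rw [Gs β α]
      ring
  have e10 : (∑ α : Fin 4, ∑ β : Fin 4, ∑ ρ : Fin 4, ∑ σ : Fin 4, ∑ ξ : Fin 4, ∑ η : Fin 4,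
          g⁻¹ α β * g⁻¹ ρ σ * g⁻¹ ξ η * ((h α β ρ * dh ξ σ η)))
      = (∑ α : Fin 4, ∑ β : Fin 4, ∑ ρ : Fin 4, ∑ σ : Fin 4, ∑ ξ : Fin 4, ∑ η : Fin 4,
          dh α β ρ * h σ ξ η * (g⁻¹ β ξ * g⁻¹ ρ α * g⁻¹ σ η)) := by
    refine sum6_bij (fun x : I6 => (x.2.2.2.2.1, x.2.2.2.1, x.2.2.2.2.2, x.1, x.2.2.1, x.2.1))
      (Function.bijective_iff_has_inverse.mpr ⟨fun x : I6 => (x.2.2.2.1, x.2.2.2.2.2, x.2.2.2.2.1, x.2.1, x.1, x.2.2.1), fun x => rfl, fun x => rfl⟩) _ _ ?_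
    · intro α β ρ σ ξ η
      dsimp only
      rw [hsymm α ρ β, Gs σ ρ, Gs η ξ]
      ring
  simp (config := { maxSteps := 10000000 }) only [Finset.sum_add_distrib, Finset.sum_sub_distrib]
  rw [e1, e2, e3, e4, e5, e6, e7, e8, e9, e10]
end
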